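/- Under assumptions (a) and (b), for t > 0 let I_t = {x > 0 : ∃ y > 0, L_t(x,y) = 0} and J_t = {y > 0 : ∃ x > 0, L_t(x,y) = 0}. Then: if 0 < t < t₀ the sets I_t and J_t are empty; if t = t₀ the sets I_t and J_t are singletons; and if t > t₀ then I_t and J_t are compact intervals with nonempty interior, I_t = [x₂, x₃] with 0 < x₂ < x₃ and J_t = [y₂, y₃] with 0 < y₂ < y₃. In particular, t₀ = inf{t > 0 : I_t ≠ ∅} and t₀ is the unique t > 0 for which I_t is a singleton (i.e., for which x₂ = x₃). -/

import Mathlib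

open Finset Filter

/-- Cyclic list of the eight neighbor weights
`p₁,₁, p₁,₀, p₁,₋₁, p₀,₋₁, p₋₁,₋₁, p₋₁,₀, p₋₁,₁, p₀,₁`. -/
def cyc (p : ℤ → ℤ → ℝ) : Fin 8 → ℝ :=
  ![p 1 1, p 1 0, p 1 (-1), p 0 (-1), p (-1) (-1), p (-1) 0, p (-1) 1, p 0 1]

/-- The Laplace transform `φ(a₁,a₂) = Σ p_{k,ℓ} e^{k a₁ + ℓ a₂}` (small steps case). -/
noncomputable def phi (p : ℤ → ℤ → ℝ) (a : ℝ × ℝ) : ℝ :=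
  ∑ k ∈ Finset.Icc (-1 : ℤ) 1, ∑ l ∈ Finset.Icc (-1 : ℤ) 1,
    p k l * Real.exp (k * a.1 + l * a.2)

/-- `f` is `t`-harmonic for the walk with weights `p` killed at the boundary of the quadrant:
(1) harmonicity in the interior, (2) positivity in the interior, (3) vanishing on the boundary
and the exterior of the quadrant. -/
def THarmonic (p : ℤ → ℤ → ℝ) (t : ℝ) (f : ℤ → ℤ → ℝ) : Prop :=
  (∀ i j : ℤ, 1 ≤ i → 1 ≤ j →
    ∑ k ∈ Finset.Icc (-1 : ℤ) 1, ∑ l ∈ Finset.Icc (-1 : ℤ) 1,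
      p k l * f (i + k) (j + l) = t * f i j) ∧
  (∀ i j : ℤ, 1 ≤ i → 1 ≤ j → 0 < f i j) ∧
  (∀ i j : ℤ, i ≤ 0 ∨ j ≤ 0 → f i j = 0)

/-- The kernel `L_t(x,y) = xy(Σ_{k,ℓ} p_{k,ℓ} x^{−k} y^{−ℓ} − t)`. -/
noncomputable def LkerZ (p : ℤ → ℤ → ℝ) (t x y : ℝ) : ℝ :=
  x * y * ((∑ k ∈ Finset.Icc (-1 : ℤ) 1, ∑ l ∈ Finset.Icc (-1 : ℤ) 1,
    p k l * x ^ (-k) * y ^ (-l)) - t)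

/-- `I_t = {x > 0 : ∃ y > 0, L_t(x,y) = 0}`. -/
noncomputable def Iset (p : ℤ → ℤ → ℝ) (t : ℝ) : Set ℝ :=
  {x : ℝ | 0 < x ∧ ∃ y : ℝ, 0 < y ∧ LkerZ p t x y = 0}

/-- `J_t = {y > 0 : ∃ x > 0, L_t(x,y) = 0}`. -/
noncomputable def Jset (p : ℤ → ℤ → ℝ) (t : ℝ) : Set ℝ :=
  {y : ℝ | 0 < y ∧ ∃ x : ℝ, 0 < x ∧ LkerZ p t x y = 0}

/-! With `x = e^{-a}` and `y = e^{-b}` the kernel is `L_t(x, y) = x y (φ(a, b) - t)`, so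
`I_t = {e^{-a} : t ∈ φ(a, ℝ)}`. For fixed `a`, `φ(a, b) = C(a) e^b + B(a) + A(a) e^{-b}` with
`A, C > 0`, whose range is `[m(a), ∞)` where `m(a) = B(a) + 2 √(A(a) C(a))`; thus
`I_t = {e^{-a} : m(a) ≤ t}`. Condition (b) keeps the support of `p` off every line through the
origin, which makes `φ` strictly convex on `ℝ²`, hence also its partial minimum `m`, whose minimum
value is `t₀`. A continuous strictly convex function on `ℝ` with minimum value `t₀`
has empty sublevel sets below `t₀`, a single point at `t₀`, and nondegenerate compact intervals
above `t₀`. Finally `J_t` is `I_t` for the transposed weights `p_{ℓ,k}`. -/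

open Real

def NoThreeConsecutiveZeros (p : ℤ → ℤ → ℝ) : Prop :=
  ∀ i : Fin 8, cyc p i ≠ 0 ∨ cyc p (i + 1) ≠ 0 ∨ cyc p (i + 2) ≠ 0

lemma sum_Icc_neg_one_one {M : Type*} [AddCommMonoid M] (f : ℤ → M) :
    ∑ k ∈ Finset.Icc (-1 : ℤ) 1, f k = f (-1) + f 0 + f 1 := by
  rw [show Finset.Icc (-1 : ℤ) 1 = {-1, 0, 1} by decide, Finset.sum_insert (by decide),
    Finset.sum_insert (by decide), Finset.sum_singleton, add_assoc]

lemma range_mul_exp_add_mul_exp_neg {c α : ℝ} (hc : 0 < c) (hα : 0 < α) (β : ℝ) :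
    Set.range (fun b => c * exp b + β + α * exp (-b)) = Set.Ici (β + 2 * √(c * α)) := by
  have hsq : √(c * α) ^ 2 = c * α := sq_sqrt (by positivity)
  have amgm : ∀ b, 2 * √(c * α) ≤ c * exp b + α * exp (-b) := fun b => by
    have hb : exp b * exp (-b) = 1 := by rw [← exp_add, add_neg_cancel, exp_zero]
    have hpos : 0 < c * exp b + α * exp (-b) + 2 * √(c * α) := by positivity
    nlinarith [sq_nonneg (c * exp b - α * exp (-b))]
  ext t
  refine ⟨?_, fun ht => mem_range_of_exists_le_of_exists_ge (by fun_prop) ?_ ?_⟩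
  · rintro ⟨b, rfl⟩
    simpa [Set.mem_Ici, add_assoc, add_comm β] using add_le_add_right (amgm b) β
  · refine ⟨log (√α / √c), le_of_eq_of_le ?_ ht⟩
    have hα' := sq_sqrt hα.le
    have hc' := sq_sqrt hc.le
    rw [exp_neg, exp_log (by positivity), sqrt_mul hc.le]
    field_simp
    nlinarith
  · obtain ⟨b, hb⟩ := ((tendsto_exp_atTop.const_mul_atTop hc).eventually_ge_atTop (t - β)).exists
    exact ⟨b, by nlinarith [exp_pos (-b)]⟩

lemma StrictConvexOn.of_isLeast_range_section {𝕜 E F β : Type*} [Semiring 𝕜] [PartialOrder 𝕜]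
    [AddCommMonoid E] [AddCommMonoid F] [AddCommMonoid β] [PartialOrder β]
    [SMul 𝕜 E] [SMul 𝕜 F] [SMul 𝕜 β] {Φ : E × F → β} (hΦ : StrictConvexOn 𝕜 Set.univ Φ)
    {g : E → β} (hg : ∀ x, IsLeast (Set.range fun y => Φ (x, y)) (g x)) :
    StrictConvexOn 𝕜 Set.univ g := by
  refine ⟨convex_univ, fun x _ x' _ hx a b ha hb hab => ?_⟩
  obtain ⟨y, hy : Φ (x, y) = g x⟩ := (hg x).1
  obtain ⟨y', hy' : Φ (x', y') = g x'⟩ := (hg x').1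
  calc g (a • x + b • x') ≤ Φ (a • (x, y) + b • (x', y')) := (hg _).2 ⟨a • y + b • y', rfl⟩
    _ < a • Φ (x, y) + b • Φ (x', y') :=
      hΦ.2 trivial trivial (fun h => hx (congrArg Prod.fst h)) ha hb hab
    _ = a • g x + b • g x' := by rw [hy, hy']

lemma ConvexOn.exists_gt_lt_apply {f : ℝ → ℝ} (hf : ConvexOn ℝ Set.univ f) {x y : ℝ}
    (hxy : x < y) (hfxy : f x < f y) (t : ℝ) : ∃ z, y < z ∧ t < f z := by
  set s := (f y - f x) / (y - x)
  have hs : 0 < s := div_pos (sub_pos.2 hfxy) (sub_pos.2 hxy)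
  have hyz : y < y + (|t - f y| + 1) / s := lt_add_of_pos_right _ (by positivity)
  refine ⟨_, hyz, ?_⟩
  have key := hf.slope_mono_adjacent (Set.mem_univ x) (Set.mem_univ _) hxy hyz
  rw [add_sub_cancel_left, le_div_iff₀ (by positivity), mul_div_cancel₀ _ hs.ne'] at key
  linarith [le_abs_self (t - f y)]

lemma ConvexOn.exists_lt_lt_apply {f : ℝ → ℝ} (hf : ConvexOn ℝ Set.univ f) {x y : ℝ}
    (hxy : x < y) (hfxy : f y < f x) (t : ℝ) : ∃ z, z < x ∧ t < f z := by
  have hneg : ConvexOn ℝ Set.univ fun z => f (-z) := by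
    have := hf.comp_linearMap (-LinearMap.id : ℝ →ₗ[ℝ] ℝ)
    simp only [Set.preimage_univ] at this
    exact this
  obtain ⟨z, hz, hfz⟩ := hneg.exists_gt_lt_apply (neg_lt_neg hxy) (by simpa using hfxy) t
  exact ⟨-z, by linarith, hfz⟩

lemma StrictConvexOn.setOf_le_eq_singleton {f : ℝ → ℝ} (hf : StrictConvexOn ℝ Set.univ f)
    {a₀ : ℝ} (hmin : ∀ a, f a₀ ≤ f a) : {a | f a ≤ f a₀} = {a₀} := by
  ext a
  refine ⟨fun ha => hf.eq_of_isMinOn (fun b _ => ha.trans (hmin b)) (fun b _ => hmin b)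
    trivial trivial, fun (ha : a = a₀) => show f a ≤ f a₀ from ha ▸ le_rfl⟩

lemma StrictConvexOn.exists_setOf_le_eq_Icc {f : ℝ → ℝ} (hf : StrictConvexOn ℝ Set.univ f)
    (hcont : Continuous f) {a₀ t : ℝ} (hmin : ∀ a, f a₀ ≤ f a) (ht : f a₀ < t) :
    ∃ u v, u < v ∧ {a | f a ≤ t} = Set.Icc u v := by
  have hgt : ∀ a ≠ a₀, f a₀ < f a := fun a ha => (hmin a).lt_of_ne fun h =>
    ha (hf.eq_of_isMinOn (fun b _ => h ▸ hmin b) (fun b _ => hmin b) trivial trivial)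
  obtain ⟨R, hR, hfR⟩ := hf.convexOn.exists_gt_lt_apply (lt_add_one a₀) (hgt _ (by simp)) t
  obtain ⟨L, hL, hfL⟩ := hf.convexOn.exists_lt_lt_apply (sub_one_lt a₀) (hgt _ (by simp)) t
  obtain ⟨v, ⟨hv₀, -⟩, hfv⟩ :=
    intermediate_value_Ioo (by linarith) hcont.continuousOn ⟨ht, hfR⟩
  obtain ⟨u, ⟨-, hu₀⟩, hfu⟩ :=
    intermediate_value_Ioo' (by linarith) hcont.continuousOn ⟨ht, hfL⟩
  refine ⟨u, v, hu₀.trans hv₀, Set.Subset.antisymm (fun a (ha : f a ≤ t) => ?_) fun a ha => ?_⟩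
  · -- by strict convexity, a sublevel point outside `[u, v]` forces `f u < t` or `f v < t`
    by_contra hIcc
    rcases not_and_or.1 hIcc with hau | hva
    · have hseg : u ∈ openSegment ℝ a a₀ := by
        rw [openSegment_eq_Ioo (by linarith)]
        exact ⟨not_le.1 hau, hu₀⟩
      exact (hfu ▸ hf.lt_on_openSegment trivial trivial (by linarith) hseg).not_ge
        (max_le ha ht.le)
    · have hseg : v ∈ openSegment ℝ a₀ a := by
        rw [openSegment_eq_Ioo (by linarith)]
        exact ⟨hv₀, not_le.1 hva⟩
      exact (hfv ▸ hf.lt_on_openSegment trivial trivial (by linarith) hseg).not_ge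
        (max_le ht.le ha)
  · have hseg : a ∈ segment ℝ u v := by rwa [segment_eq_Icc (hu₀.trans hv₀).le]
    exact (hf.convexOn.le_on_segment trivial trivial hseg).trans (max_le hfu.le hfv.le)

lemma setOf_pos_and_neg_log_mem (S : Set ℝ) :
    {x : ℝ | 0 < x ∧ -log x ∈ S} = (fun a => exp (-a)) '' S := by
  ext x
  constructor
  · rintro ⟨hx, hS⟩
    exact ⟨-log x, hS, by simp [exp_log hx]⟩
  · rintro ⟨a, ha, rfl⟩
    exact ⟨exp_pos _, by rwa [log_exp, neg_neg]⟩

lemma image_exp_neg_Icc (u v : ℝ) :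
    (fun a => exp (-a)) '' Set.Icc u v = Set.Icc (exp (-v)) (exp (-u)) := by
  rw [show (fun a => exp (-a)) = exp ∘ Neg.neg from rfl, Set.image_comp, Set.image_neg_eq_neg,
    Set.neg_Icc, image_exp_Icc]

lemma zpow_neg_eq_exp {x : ℝ} (hx : 0 < x) (k : ℤ) : x ^ (-k) = exp (k * -log x) := by
  rw [← rpow_intCast, rpow_def_of_pos hx]
  push_cast
  ring_nf

lemma LkerZ_eq_mul_phi_sub (p : ℤ → ℤ → ℝ) (t : ℝ) {x y : ℝ} (hx : 0 < x) (hy : 0 < y) :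
    LkerZ p t x y = x * y * (phi p (-log x, -log y) - t) := by
  simp only [LkerZ, phi, mul_assoc, zpow_neg_eq_exp hx, zpow_neg_eq_exp hy, ← exp_add]

lemma Iset_eq_setOf_mem_range (p : ℤ → ℤ → ℝ) (t : ℝ) :
    Iset p t = {x | 0 < x ∧ t ∈ Set.range fun b => phi p (-log x, b)} := by
  ext x
  refine and_congr_right fun hx => ⟨?_, ?_⟩
  · rintro ⟨y, hy, h⟩
    rw [LkerZ_eq_mul_phi_sub p t hx hy] at h
    exact ⟨-log y, by simpa [hx.ne', hy.ne', sub_eq_zero] using h⟩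
  · rintro ⟨b, rfl⟩
    refine ⟨exp (-b), exp_pos _, ?_⟩
    rw [LkerZ_eq_mul_phi_sub p _ hx (exp_pos _), log_exp, neg_neg, sub_self, mul_zero]

noncomputable def rowSum (p : ℤ → ℤ → ℝ) (l : ℤ) (a : ℝ) : ℝ :=
  ∑ k ∈ Finset.Icc (-1 : ℤ) 1, p k l * exp (k * a)

lemma phi_eq_rowSum (p : ℤ → ℤ → ℝ) (a b : ℝ) :
    phi p (a, b) = rowSum p 1 a * exp b + rowSum p 0 a + rowSum p (-1) a * exp (-b) := by
  simp only [phi, rowSum, exp_add, ← mul_assoc]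
  rw [Finset.sum_comm, sum_Icc_neg_one_one]
  simp only [← Finset.sum_mul]
  push_cast
  simp only [neg_one_mul, zero_mul, exp_zero, mul_one, one_mul]
  ring

lemma exists_row_ne_zero {p : ℤ → ℤ → ℝ} (hnz : NoThreeConsecutiveZeros p) {l : ℤ}
    (hl : l = 1 ∨ l = -1) : ∃ k ∈ Finset.Icc (-1 : ℤ) 1, p k l ≠ 0 := by
  rcases hl with rfl | rfl
  · rcases hnz 6 with h | h | h
    exacts [⟨-1, by decide, h⟩, ⟨0, by decide, h⟩, ⟨1, by decide, h⟩]
  · rcases hnz 2 with h | h | h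
    exacts [⟨1, by decide, h⟩, ⟨0, by decide, h⟩, ⟨-1, by decide, h⟩]

lemma rowSum_pos {p : ℤ → ℤ → ℝ} (hpos : ∀ k l : ℤ, 0 ≤ p k l) {l : ℤ}
    (hl : ∃ k ∈ Finset.Icc (-1 : ℤ) 1, p k l ≠ 0) (a : ℝ) : 0 < rowSum p l a := by
  obtain ⟨k, hk, hkl⟩ := hl
  exact Finset.sum_pos' (fun j _ => mul_nonneg (hpos j l) (exp_pos _).le)
    ⟨k, hk, mul_pos ((hpos k l).lt_of_ne' hkl) (exp_pos _)⟩

noncomputable def minPhi (p : ℤ → ℤ → ℝ) (a : ℝ) : ℝ :=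
  rowSum p 0 a + 2 * √(rowSum p 1 a * rowSum p (-1) a)

lemma range_phi_section {p : ℤ → ℤ → ℝ} (hpos : ∀ k l : ℤ, 0 ≤ p k l)
    (hnz : NoThreeConsecutiveZeros p) (a : ℝ) :
    Set.range (fun b => phi p (a, b)) = Set.Ici (minPhi p a) := by
  simp only [phi_eq_rowSum]
  exact range_mul_exp_add_mul_exp_neg (rowSum_pos hpos (exists_row_ne_zero hnz (.inl rfl)) a)
    (rowSum_pos hpos (exists_row_ne_zero hnz (.inr rfl)) a) _

lemma isLeast_range_phi_section {p : ℤ → ℤ → ℝ} (hpos : ∀ k l : ℤ, 0 ≤ p k l)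
    (hnz : NoThreeConsecutiveZeros p) (a : ℝ) :
    IsLeast (Set.range fun b => phi p (a, b)) (minPhi p a) :=
  range_phi_section hpos hnz a ▸ isLeast_Ici

lemma Iset_eq_image {p : ℤ → ℤ → ℝ} (hpos : ∀ k l : ℤ, 0 ≤ p k l)
    (hnz : NoThreeConsecutiveZeros p) (t : ℝ) :
    Iset p t = (fun a => exp (-a)) '' {a | minPhi p a ≤ t} := by
  rw [Iset_eq_setOf_mem_range, ← setOf_pos_and_neg_log_mem]
  simp only [range_phi_section hpos hnz, Set.mem_Ici, Set.mem_ofPred_eq]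

lemma exists_ne_zero_mul_add_mul_ne_zero {p : ℤ → ℤ → ℝ} (hnz : NoThreeConsecutiveZeros p)
    {d₁ d₂ : ℝ} (hd : d₁ ≠ 0 ∨ d₂ ≠ 0) :
    ∃ k ∈ Finset.Icc (-1 : ℤ) 1, ∃ l ∈ Finset.Icc (-1 : ℤ) 1,
      p k l ≠ 0 ∧ k * d₁ + l * d₂ ≠ 0 := by
  -- The line `k d₁ + l d₂ = 0` contains at most two opposite neighbours of the origin, so
  -- otherwise some three cyclically consecutive weights vanish; each case names such a window.
  by_contra! h
  have hz : ∀ k ∈ Finset.Icc (-1 : ℤ) 1, ∀ l ∈ Finset.Icc (-1 : ℤ) 1,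
      (k * d₁ + l * d₂ ≠ 0) → p k l = 0 := fun k hk l hl => not_imp_comm.1 (h k hk l hl)
  have hwin : ∀ i : Fin 8, ¬(cyc p i = 0 ∧ cyc p (i + 1) = 0 ∧ cyc p (i + 2) = 0) :=
    fun i => by have := hnz i; tauto
  rcases eq_or_ne d₂ 0 with h2 | h2
  · exact hwin 0 ⟨hz 1 (by decide) 1 (by decide) (by push_cast; grind),
      hz 1 (by decide) 0 (by decide) (by push_cast; grind),
      hz 1 (by decide) (-1) (by decide) (by push_cast; grind)⟩
  rcases eq_or_ne d₁ 0 with h1 | h1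
  · exact hwin 2 ⟨hz 1 (by decide) (-1) (by decide) (by push_cast; grind),
      hz 0 (by decide) (-1) (by decide) (by push_cast; grind),
      hz (-1) (by decide) (-1) (by decide) (by push_cast; grind)⟩
  rcases eq_or_ne (d₁ + d₂) 0 with h3 | h3
  · exact hwin 1 ⟨hz 1 (by decide) 0 (by decide) (by push_cast; grind),
      hz 1 (by decide) (-1) (by decide) (by push_cast; grind),
      hz 0 (by decide) (-1) (by decide) (by push_cast; grind)⟩
  rcases eq_or_ne (d₁ - d₂) 0 with h4 | h4
  · exact hwin 3 ⟨hz 0 (by decide) (-1) (by decide) (by push_cast; grind),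
      hz (-1) (by decide) (-1) (by decide) (by push_cast; grind),
      hz (-1) (by decide) 0 (by decide) (by push_cast; grind)⟩
  · exact hwin 0 ⟨hz 1 (by decide) 1 (by decide) (by push_cast; grind),
      hz 1 (by decide) 0 (by decide) (by push_cast; grind),
      hz 1 (by decide) (-1) (by decide) (by push_cast; grind)⟩

lemma strictConvexOn_phi {p : ℤ → ℤ → ℝ} (hpos : ∀ k l : ℤ, 0 ≤ p k l)
    (hnz : NoThreeConsecutiveZeros p) :
    StrictConvexOn ℝ Set.univ (phi p) := by
  refine ⟨convex_univ, fun x _ y _ hxy a b ha hb hab => ?_⟩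
  obtain ⟨k, hk, l, hl, hkl, hdir⟩ := exists_ne_zero_mul_add_mul_ne_zero hnz
    (d₁ := x.1 - y.1) (d₂ := x.2 - y.2) (by
      by_contra! h
      exact hxy (Prod.ext (sub_eq_zero.1 h.1) (sub_eq_zero.1 h.2)))
  have hle : ∀ w u v : ℝ, 0 ≤ w → w * exp (a * u + b * v) ≤ a * (w * exp u) + b * (w * exp v) :=
    fun w u v hw => by
      have := convexOn_exp.2 (Set.mem_univ u) (Set.mem_univ v) ha.le hb.le hab
      simp only [smul_eq_mul] at this
      nlinarith
  have hlt : ∀ w u v : ℝ, 0 < w → u ≠ v →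
      w * exp (a * u + b * v) < a * (w * exp u) + b * (w * exp v) := fun w u v hw huv => by
    have := strictConvexOn_exp.2 (Set.mem_univ u) (Set.mem_univ v) huv ha hb hab
    simp only [smul_eq_mul] at this
    nlinarith
  have hcomb : ∀ k l : ℤ, (k : ℝ) * (a * x.1 + b * y.1) + l * (a * x.2 + b * y.2) =
      a * (k * x.1 + l * x.2) + b * (k * y.1 + l * y.2) := fun k l => by ring
  simp only [phi, smul_eq_mul, Finset.mul_sum, ← Finset.sum_add_distrib, Prod.fst_add,
    Prod.snd_add, Prod.smul_fst, Prod.smul_snd, hcomb]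
  refine Finset.sum_lt_sum (fun k _ => Finset.sum_le_sum fun l _ => hle _ _ _ (hpos k l))
    ⟨k, hk, Finset.sum_lt_sum (fun l _ => hle _ _ _ (hpos k l)) ⟨l, hl, ?_⟩⟩
  refine hlt _ _ _ ((hpos k l).lt_of_ne' hkl) fun h => hdir ?_
  linear_combination h

lemma strictConvexOn_minPhi {p : ℤ → ℤ → ℝ} (hpos : ∀ k l : ℤ, 0 ≤ p k l)
    (hnz : NoThreeConsecutiveZeros p) :
    StrictConvexOn ℝ Set.univ (minPhi p) :=
  (strictConvexOn_phi hpos hnz).of_isLeast_range_section (isLeast_range_phi_section hpos hnz)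

lemma continuous_minPhi (p : ℤ → ℤ → ℝ) : Continuous (minPhi p) := by
  unfold minPhi rowSum
  fun_prop

lemma minPhi_pos {p : ℤ → ℤ → ℝ} (hpos : ∀ k l : ℤ, 0 ≤ p k l)
    (hnz : NoThreeConsecutiveZeros p) (a : ℝ) :
    0 < minPhi p a := by
  have h0 : 0 ≤ rowSum p 0 a := Finset.sum_nonneg fun k _ => mul_nonneg (hpos k 0) (exp_pos _).le
  have h1 := rowSum_pos hpos (exists_row_ne_zero hnz (.inl rfl)) a
  have h2 := rowSum_pos hpos (exists_row_ne_zero hnz (.inr rfl)) a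
  unfold minPhi
  positivity

lemma isLeast_range_minPhi {p : ℤ → ℤ → ℝ} (hpos : ∀ k l : ℤ, 0 ≤ p k l)
    (hnz : NoThreeConsecutiveZeros p) {t0 : ℝ}
    (ht0 : IsLeast (Set.range (phi p)) t0) : IsLeast (Set.range (minPhi p)) t0 := by
  have hsec := isLeast_range_phi_section hpos hnz
  have hlower : ∀ a, t0 ≤ minPhi p a := fun a => by
    obtain ⟨b, hb⟩ := (hsec a).1
    exact hb ▸ ht0.2 ⟨_, rfl⟩
  obtain ⟨⟨a, b⟩, hab⟩ := ht0.1
  exact ⟨⟨a, le_antisymm (hab ▸ (hsec a).2 ⟨b, rfl⟩) (hlower a)⟩,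
    by rintro _ ⟨a', rfl⟩; exact hlower a'⟩

lemma pos_of_isLeast_range_phi {p : ℤ → ℤ → ℝ} (hpos : ∀ k l : ℤ, 0 ≤ p k l)
    (hnz : NoThreeConsecutiveZeros p) {t0 : ℝ}
    (ht0 : IsLeast (Set.range (phi p)) t0) : 0 < t0 := by
  obtain ⟨⟨a, ha⟩, -⟩ := isLeast_range_minPhi hpos hnz ht0
  exact ha ▸ minPhi_pos hpos hnz a

lemma Iset_eq_empty {p : ℤ → ℤ → ℝ} (hpos : ∀ k l : ℤ, 0 ≤ p k l)
    (hnz : NoThreeConsecutiveZeros p) {t0 t : ℝ}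
    (ht0 : IsLeast (Set.range (phi p)) t0) (ht : t < t0) : Iset p t = ∅ := by
  have hlower := (isLeast_range_minPhi hpos hnz ht0).2
  rw [Iset_eq_image hpos hnz, Set.image_eq_empty]
  exact Set.eq_empty_of_forall_notMem fun a (ha : minPhi p a ≤ t) =>
    (ht.trans_le (hlower ⟨a, rfl⟩)).not_ge ha

lemma exists_Iset_eq_singleton {p : ℤ → ℤ → ℝ} (hpos : ∀ k l : ℤ, 0 ≤ p k l)
    (hnz : NoThreeConsecutiveZeros p) {t0 : ℝ}
    (ht0 : IsLeast (Set.range (phi p)) t0) : ∃ x, Iset p t0 = {x} := by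
  obtain ⟨⟨a₀, ha₀⟩, hlower⟩ := isLeast_range_minPhi hpos hnz ht0
  refine ⟨exp (-a₀), ?_⟩
  rw [Iset_eq_image hpos hnz, ← ha₀, (strictConvexOn_minPhi hpos hnz).setOf_le_eq_singleton
    fun a => ha₀ ▸ hlower ⟨a, rfl⟩, Set.image_singleton]

lemma exists_Iset_eq_Icc {p : ℤ → ℤ → ℝ} (hpos : ∀ k l : ℤ, 0 ≤ p k l)
    (hnz : NoThreeConsecutiveZeros p) {t0 t : ℝ}
    (ht0 : IsLeast (Set.range (phi p)) t0) (ht : t0 < t) :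
    ∃ x₂ x₃, 0 < x₂ ∧ x₂ < x₃ ∧ Iset p t = Set.Icc x₂ x₃ := by
  obtain ⟨⟨a₀, ha₀⟩, hlower⟩ := isLeast_range_minPhi hpos hnz ht0
  obtain ⟨u, v, huv, hS⟩ := (strictConvexOn_minPhi hpos hnz).exists_setOf_le_eq_Icc
    (continuous_minPhi p) (fun a => ha₀ ▸ hlower ⟨a, rfl⟩) (ha₀ ▸ ht)
  exact ⟨exp (-v), exp (-u), exp_pos _, exp_lt_exp.2 (neg_lt_neg huv),
    by rw [Iset_eq_image hpos hnz, hS, image_exp_neg_Icc]⟩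

lemma Iset_nonempty_iff {p : ℤ → ℤ → ℝ} (hpos : ∀ k l : ℤ, 0 ≤ p k l)
    (hnz : NoThreeConsecutiveZeros p) {t0 t : ℝ}
    (ht0 : IsLeast (Set.range (phi p)) t0) : (Iset p t).Nonempty ↔ t0 ≤ t := by
  refine ⟨fun h => not_lt.1 fun ht => h.ne_empty (Iset_eq_empty hpos hnz ht0 ht), fun ht => ?_⟩
  obtain ⟨⟨a₀, ha₀⟩, -⟩ := isLeast_range_minPhi hpos hnz ht0
  rw [Iset_eq_image hpos hnz]
  exact ⟨_, Set.mem_image_of_mem _ (show minPhi p a₀ ≤ t from ha₀ ▸ ht)⟩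

lemma exists_Iset_eq_singleton_iff {p : ℤ → ℤ → ℝ} (hpos : ∀ k l : ℤ, 0 ≤ p k l)
    (hnz : NoThreeConsecutiveZeros p) {t0 t : ℝ}
    (ht0 : IsLeast (Set.range (phi p)) t0) : (∃ x, Iset p t = {x}) ↔ t = t0 := by
  refine ⟨fun ⟨x, hx⟩ => ?_, fun ht => ht ▸ exists_Iset_eq_singleton hpos hnz ht0⟩
  rcases lt_trichotomy t t0 with h | h | h
  · exact absurd (Iset_eq_empty hpos hnz ht0 h ▸ hx).symm (Set.singleton_ne_empty x)
  · exact h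
  · obtain ⟨x₂, x₃, -, h₂₃, hI⟩ := exists_Iset_eq_Icc hpos hnz ht0 h
    rw [hI, Set.Icc_eq_singleton_iff] at hx
    exact absurd (hx.1.trans hx.2.symm) h₂₃.ne

lemma LkerZ_flip (p : ℤ → ℤ → ℝ) (t x y : ℝ) :
    LkerZ (flip p) t y x = LkerZ p t x y := by
  simp only [LkerZ, mul_comm y x]
  rw [Finset.sum_comm]
  congr 2
  exact Finset.sum_congr rfl fun k _ => Finset.sum_congr rfl fun l _ => mul_right_comm _ _ _

lemma Jset_eq_Iset_flip (p : ℤ → ℤ → ℝ) (t : ℝ) : Jset p t = Iset (flip p) t := by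
  ext y
  simp only [Jset, Iset, Set.mem_ofPred_eq, LkerZ_flip]

lemma range_phi_flip (p : ℤ → ℤ → ℝ) : Set.range (phi (flip p)) = Set.range (phi p) := by
  have : phi (flip p) = phi p ∘ Prod.swap := funext fun z => by
    simp only [phi, Function.comp_apply, Prod.fst_swap, Prod.snd_swap]
    rw [Finset.sum_comm]
    simp only [flip, add_comm]
  rw [this, Prod.swap_surjective.range_comp]

lemma cyc_flip (p : ℤ → ℤ → ℝ) (i : Fin 8) : cyc (flip p) i = cyc p (-i) := by
  fin_cases i <;> rfl

lemma NoThreeConsecutiveZeros.flip {p : ℤ → ℤ → ℝ} (hnz : NoThreeConsecutiveZeros p) :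
    NoThreeConsecutiveZeros (flip p) := fun i => by
  have hidx : ∀ j : Fin 8, -(j + 2) + 1 = -(j + 1) ∧ -(j + 2) + 2 = -j := by decide
  have h := hnz (-(i + 2))
  rw [(hidx i).1, (hidx i).2] at h
  simp only [cyc_flip]
  tauto

theorem Iset_Jset_structure_general (p : ℤ → ℤ → ℝ)
    (hpos : ∀ k l : ℤ, 0 ≤ p k l)
    (hnz : ∀ i : Fin 8, cyc p i ≠ 0 ∨ cyc p (i + 1) ≠ 0 ∨ cyc p (i + 2) ≠ 0)
    (t0 : ℝ) (ht0 : IsLeast (Set.range (phi p)) t0) :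
    (∀ t : ℝ, 0 < t → t < t0 → Iset p t = ∅ ∧ Jset p t = ∅) ∧
    ((∃ x : ℝ, Iset p t0 = {x}) ∧ (∃ y : ℝ, Jset p t0 = {y})) ∧
    (∀ t : ℝ, t0 < t →
      (∃ x2 x3 : ℝ, 0 < x2 ∧ x2 < x3 ∧ Iset p t = Set.Icc x2 x3) ∧
      (∃ y2 y3 : ℝ, 0 < y2 ∧ y2 < y3 ∧ Jset p t = Set.Icc y2 y3)) ∧
    t0 = sInf {t : ℝ | 0 < t ∧ (Iset p t).Nonempty} ∧
    (∀ t : ℝ, 0 < t → ((∃ x : ℝ, Iset p t = {x}) ↔ t = t0)) := by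
  have hposT : ∀ k l : ℤ, 0 ≤ p l k := fun k l => hpos l k
  have hnzT := NoThreeConsecutiveZeros.flip hnz
  have ht0T : IsLeast (Set.range (phi (flip p))) t0 := by rwa [range_phi_flip]
  have hIset : {t : ℝ | 0 < t ∧ (Iset p t).Nonempty} = Set.Ici t0 := by
    ext t
    simp only [Set.mem_ofPred_eq, Set.mem_Ici, Iset_nonempty_iff hpos hnz ht0,
      and_iff_right_iff_imp]
    exact (pos_of_isLeast_range_phi hpos hnz ht0).trans_le
  simp only [Jset_eq_Iset_flip]
  exact ⟨fun t _ ht => ⟨Iset_eq_empty hpos hnz ht0 ht, Iset_eq_empty hposT hnzT ht0T ht⟩,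
    ⟨exists_Iset_eq_singleton hpos hnz ht0, exists_Iset_eq_singleton hposT hnzT ht0T⟩,
    fun t ht => ⟨exists_Iset_eq_Icc hpos hnz ht0 ht, exists_Iset_eq_Icc hposT hnzT ht0T ht⟩,
    by rw [hIset, csInf_Ici], fun t _ => exists_Iset_eq_singleton_iff hpos hnz ht0⟩

/-- the sets `I_t` and `J_t` are empty for `t < t₀`, singletons for `t = t₀`,
and compact intervals with nonempty interior for `t > t₀`; moreover
`t₀ = inf {t > 0 : I_t ≠ ∅}` and `t₀` is the unique `t > 0` with `I_t` a singleton. -/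
theorem Iset_Jset_structure (p : ℤ → ℤ → ℝ)
    (hpos : ∀ k l : ℤ, 0 ≤ p k l)
    (hsum : ∑ k ∈ Finset.Icc (-1 : ℤ) 1, ∑ l ∈ Finset.Icc (-1 : ℤ) 1, p k l = 1)
    (hp00 : p 0 0 = 0)
    (hsmall : ∀ k l : ℤ, (1 < |k| ∨ 1 < |l|) → p k l = 0)
    (hnz : ∀ i : Fin 8, cyc p i ≠ 0 ∨ cyc p (i + 1) ≠ 0 ∨ cyc p (i + 2) ≠ 0)
    (t0 : ℝ) (ht0 : IsLeast (Set.range (phi p)) t0) :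
    (∀ t : ℝ, 0 < t → t < t0 → Iset p t = ∅ ∧ Jset p t = ∅) ∧
    ((∃ x : ℝ, Iset p t0 = {x}) ∧ (∃ y : ℝ, Jset p t0 = {y})) ∧
    (∀ t : ℝ, t0 < t →
      (∃ x2 x3 : ℝ, 0 < x2 ∧ x2 < x3 ∧ Iset p t = Set.Icc x2 x3) ∧
      (∃ y2 y3 : ℝ, 0 < y2 ∧ y2 < y3 ∧ Jset p t = Set.Icc y2 y3)) ∧
    t0 = sInf {t : ℝ | 0 < t ∧ (Iset p t).Nonempty} ∧
    (∀ t : ℝ, 0 < t → ((∃ x : ℝ, Iset p t = {x}) ↔ t = t0)) :=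
  Iset_Jset_structure_general p hpos hnz t0 ht0
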